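/- Fix reals q, c with 0 < q < c < 1, and define Φ : (0,1) → ℝ piecewise by: Φ(p) = (1 − p/q)·(c − q)² + 2pq·∫_q^c ((c − ℓ)²/ℓ³) dℓ for 0 < p ≤ q; Φ(p) = (1 − q/p)·(c − p)² + 2pq·∫_p^c ((c − ℓ)²/ℓ³) dℓ for q ≤ p ≤ c; and Φ(p) = 0 for c ≤ p < 1. Then Φ is differentiable at every point of (0,1). -/

import Mathlib

/-!
Away from the breakpoints `q` and `c`, `Φ` agrees locally with an affine function, with
`p ↦ (1 - q/p)(c - p)² + 2pq ∫_p^c (c - ℓ)²/ℓ³ dℓ` (smooth for `p > 0` by the fundamental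
theorem of calculus), or with `0`. At the breakpoints the adjacent branches agree in value and
in derivative: at `q` both derivatives equal `2q ∫_q^c (c - ℓ)²/ℓ³ dℓ - (c - q)²/q`, and at `c`
the middle one vanishes because of the factor `c - p` and the empty integral.
-/

open Set Filter Topology

theorem HasDerivAt.of_eventuallyEq_nhdsLE_nhdsGE {f g h : ℝ → ℝ} {a f' : ℝ}
    (hg : HasDerivAt g f' a) (hh : HasDerivAt h f' a)
    (hfg : f =ᶠ[𝓝[≤] a] g) (hfh : f =ᶠ[𝓝[≥] a] h) : HasDerivAt f f' a := by
  have hleft := hg.hasDerivWithinAt.congr_of_eventuallyEq hfg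
    (hfg.self_of_nhdsWithin (le_refl a))
  have hright := hh.hasDerivWithinAt.congr_of_eventuallyEq hfh
    (hfh.self_of_nhdsWithin (le_refl a))
  simpa only [Iic_union_Ici, hasDerivWithinAt_univ] using hleft.union hright

theorem hasDerivAt_integral_left_of_continuousOn {f : ℝ → ℝ} {s : Set ℝ} {a b : ℝ}
    (hs : IsOpen s) (hf : ContinuousOn f s) (hab : uIcc a b ⊆ s) :
    HasDerivAt (fun u => ∫ x in u..b, f x) (-f a) a :=
  have ha : a ∈ s := hab left_mem_uIcc
  intervalIntegral.integral_hasDerivAt_left ((hf.mono hab).intervalIntegrable)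
    (hf.stronglyMeasurableAtFilter hs a ha) (hf.continuousAt (hs.mem_nhds ha))

namespace BuzzerPotential

variable (q c : ℝ)

noncomputable def leftBranch (p : ℝ) : ℝ :=
  (1 - p / q) * (c - q) ^ 2 + 2 * p * q * ∫ ℓ in q..c, (c - ℓ) ^ 2 / ℓ ^ 3

noncomputable def midBranch (p : ℝ) : ℝ :=
  (1 - q / p) * (c - p) ^ 2 + 2 * p * q * ∫ ℓ in p..c, (c - ℓ) ^ 2 / ℓ ^ 3

noncomputable def potential (p : ℝ) : ℝ :=
  if p ≤ q then leftBranch q c p else if p ≤ c then midBranch q c p else 0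

theorem hasDerivAt_leftBranch (p : ℝ) :
    HasDerivAt (leftBranch q c)
      (2 * q * (∫ ℓ in q..c, (c - ℓ) ^ 2 / ℓ ^ 3) - (c - q) ^ 2 / q) p :=
  ((((hasDerivAt_id' p).div_const q).const_sub 1).mul_const ((c - q) ^ 2)).add
    ((((hasDerivAt_id' p).const_mul 2).mul_const q).mul_const _) |>.congr_deriv (by ring)

theorem continuousOn_integrand : ContinuousOn (fun ℓ : ℝ => (c - ℓ) ^ 2 / ℓ ^ 3) (Ioi 0) :=
  ContinuousOn.div (by fun_prop) (by fun_prop) fun _ hℓ => pow_ne_zero 3 (ne_of_gt hℓ)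

theorem hasDerivAt_midBranch {p : ℝ} (hp : 0 < p) (hc : 0 < c) :
    HasDerivAt (midBranch q c)
      (2 * q * (∫ ℓ in p..c, (c - ℓ) ^ 2 / ℓ ^ 3)
        - (c - p) * (2 * (1 - q / p) + q * (c - p) / p ^ 2)) p := by
  have hint := hasDerivAt_integral_left_of_continuousOn isOpen_Ioi (continuousOn_integrand c)
    (b := c) fun _ hx => (lt_min hp hc).trans_le hx.1
  refine ((((hasDerivAt_const p q).div (hasDerivAt_id' p) hp.ne').const_sub 1).mul
    (((hasDerivAt_id' p).const_sub c).pow 2)).add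
    ((((hasDerivAt_id' p).const_mul 2).mul_const q).mul hint) |>.congr_deriv ?_
  simp only [Pi.div_apply, Pi.pow_apply]
  field_simp
  ring

variable {q c}

theorem potential_eq_leftBranch {p : ℝ} (hp : p ≤ q) : potential q c p = leftBranch q c p :=
  if_pos hp

theorem potential_eq_midBranch (hq : 0 < q) {p : ℝ} (hqp : q ≤ p) (hpc : p ≤ c) :
    potential q c p = midBranch q c p := by
  rcases hqp.eq_or_lt with rfl | hqp
  · simp [potential, leftBranch, midBranch, hq.ne']
  · simp [potential, hqp.not_ge, hpc]

theorem potential_eq_zero (hqc : q < c) {p : ℝ} (hcp : c ≤ p) : potential q c p = 0 := by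
  rcases hcp.eq_or_lt with rfl | hcp
  · simp [potential, hqc.not_ge, midBranch]
  · simp [potential, (hqc.trans hcp).not_ge, hcp.not_ge]

theorem hasDerivAt_potential_at_q (hq : 0 < q) (hqc : q < c) :
    HasDerivAt (potential q c)
      (2 * q * (∫ ℓ in q..c, (c - ℓ) ^ 2 / ℓ ^ 3) - (c - q) ^ 2 / q) q := by
  refine (hasDerivAt_leftBranch q c q).of_eventuallyEq_nhdsLE_nhdsGE
    ((hasDerivAt_midBranch q c hq (hq.trans hqc)).congr_deriv ?_) ?_ ?_
  · field_simp
    ring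
  · exact eventually_nhdsWithin_of_forall fun _ hp => potential_eq_leftBranch hp
  · filter_upwards [Icc_mem_nhdsGE hqc] with p hp using potential_eq_midBranch hq hp.1 hp.2

theorem hasDerivAt_potential_at_c (hq : 0 < q) (hqc : q < c) :
    HasDerivAt (potential q c) 0 c := by
  have hmid := hasDerivAt_midBranch q c (hq.trans hqc) (hq.trans hqc)
  simp only [intervalIntegral.integral_same, sub_self, zero_mul, mul_zero] at hmid
  refine hmid.of_eventuallyEq_nhdsLE_nhdsGE (hasDerivAt_const c 0) ?_ ?_
  · filter_upwards [Icc_mem_nhdsLE hqc] with p hp using potential_eq_midBranch hq hp.1 hp.2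
  · exact eventually_nhdsWithin_of_forall fun _ hp => potential_eq_zero hqc hp

theorem differentiableAt_potential (hq : 0 < q) (hqc : q < c) (p : ℝ) :
    DifferentiableAt ℝ (potential q c) p := by
  rcases lt_trichotomy p q with hpq | rfl | hqp
  · refine (hasDerivAt_leftBranch q c p).differentiableAt.congr_of_eventuallyEq ?_
    filter_upwards [Iic_mem_nhds hpq] with x hx using potential_eq_leftBranch hx
  · exact (hasDerivAt_potential_at_q hq hqc).differentiableAt
  rcases lt_trichotomy p c with hpc | rfl | hcp
  · refine (hasDerivAt_midBranch q c (hq.trans hqp) (hq.trans hqc)).differentiableAt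
      |>.congr_of_eventuallyEq ?_
    filter_upwards [Ioo_mem_nhds hqp hpc] with x hx using potential_eq_midBranch hq hx.1.le hx.2.le
  · exact (hasDerivAt_potential_at_c hq hqc).differentiableAt
  · refine (differentiableAt_const (0 : ℝ)).congr_of_eventuallyEq ?_
    filter_upwards [Ici_mem_nhds hcp] with x hx using potential_eq_zero hqc hx

end BuzzerPotential

theorem stmt_13_general (q c : ℝ) (hq : 0 < q) (hqc : q < c) :
    let Φ : ℝ → ℝ := fun p =>
      if p ≤ q then
        (1 - p / q) * (c - q) ^ 2 + 2 * p * q * ∫ ℓ in q..c, (c - ℓ) ^ 2 / ℓ ^ 3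
      else if p ≤ c then
        (1 - q / p) * (c - p) ^ 2 + 2 * p * q * ∫ ℓ in p..c, (c - ℓ) ^ 2 / ℓ ^ 3
      else 0
    ∀ p ∈ Set.Ioo (0 : ℝ) 1, DifferentiableAt ℝ Φ p :=
  fun p _ => BuzzerPotential.differentiableAt_potential hq hqc p

/-- The piecewise closed-form potential function `Φ_{c,(p,q)}` of the buzzer protocol
is differentiable at every point of `(0,1)`. -/
theorem stmt_13 (q c : ℝ) (hq : 0 < q) (hqc : q < c) (hc1 : c < 1) :
    let Φ : ℝ → ℝ := fun p =>
      if p ≤ q then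
        (1 - p / q) * (c - q) ^ 2 + 2 * p * q * ∫ ℓ in q..c, (c - ℓ) ^ 2 / ℓ ^ 3
      else if p ≤ c then
        (1 - q / p) * (c - p) ^ 2 + 2 * p * q * ∫ ℓ in p..c, (c - ℓ) ^ 2 / ℓ ^ 3
      else 0
    ∀ p ∈ Set.Ioo (0 : ℝ) 1, DifferentiableAt ℝ Φ p :=
  stmt_13_general q c hq hqc
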